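/- Fix a finite group L, an integer t ≥ 2 and θ ∈ Aut(L), and let ℓ ∈ L. Then the cardinality of the twisted homogeneous rack C_ℓ equals |L|^{t-1}·|O^{L,θ}_ℓ|. -/
import Mathlib


/-- The automorphism `u` of `L^t`: `u(ℓ₁, …, ℓ_t) = (θ(ℓ_t), ℓ₁, …, ℓ_{t-1})`
(indices `0, …, t-1`, so coordinate `0` is `ℓ₁` and coordinate `t-1` is `ℓ_t`). -/
def thrU {L : Type*} [Group L] (θ : L ≃* L) (t : ℕ) (x : Fin t → L) : Fin t → L :=
  fun i => if (i : ℕ) = 0 then θ (x ⟨t - 1, by have := i.2; omega⟩)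
    else x ⟨(i : ℕ) - 1, by have := i.2; omega⟩

/-- The rack operation `y ▹ z = y · u(z · y⁻¹)` on `L^t`. -/
def thrOp {L : Type*} [Group L] (θ : L ≃* L) (t : ℕ) (y z : Fin t → L) : Fin t → L :=
  y * thrU θ t (z * y⁻¹)

/-- The element `(e, …, e, ℓ)` of `L^t`. -/
def thrBase {L : Type*} [Group L] (t : ℕ) (ℓ : L) : Fin t → L :=
  fun i => if (i : ℕ) = t - 1 then ℓ else 1

/-- The twisted conjugacy class (twisted homogeneous rack) of `x ∈ L^t`
with respect to `u`, i.e. the orbit of `x` under `g ⇀ x = g · x · u(g)⁻¹`. -/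
def thrClassOf {L : Type*} [Group L] (θ : L ≃* L) (t : ℕ) (x : Fin t → L) :
    Set (Fin t → L) :=
  {y | ∃ g : Fin t → L, g * x * (thrU θ t g)⁻¹ = y}

/-- The twisted homogeneous rack `C_ℓ = C_{(e,…,e,ℓ)}` of class `(L, t, θ)`. -/
def thrClass {L : Type*} [Group L] (θ : L ≃* L) (t : ℕ) (ℓ : L) : Set (Fin t → L) :=
  thrClassOf θ t (thrBase t ℓ)

/-- The twisted conjugacy class `O^{L,θ}_ℓ = {a·ℓ·θ(a)⁻¹ : a ∈ L}`. -/
def twConjClass {L : Type*} [Group L] (θ : L ≃* L) (ℓ : L) : Set L :=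
  {k | ∃ a : L, a * ℓ * (θ a)⁻¹ = k}


namespace THRAux

variable {L : Type*} [Group L]

/-- Reversed product `y_{n-1} ⋯ y_1 y_0`. -/
def revProd : ∀ {n : ℕ}, (Fin n → L) → L
  | 0, _ => 1
  | _ + 1, y => y (Fin.last _) * revProd (Fin.init y)

lemma revProd_zero (y : Fin 0 → L) : revProd y = 1 := rfl

lemma revProd_succ {n : ℕ} (y : Fin (n+1) → L) :
    revProd y = y (Fin.last n) * revProd (Fin.init y) := rfl

lemma revProd_one : ∀ {n : ℕ}, revProd (fun _ : Fin n => (1 : L)) = 1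
  | 0 => rfl
  | n + 1 => by
      rw [revProd_succ]
      have h : Fin.init (fun _ : Fin (n+1) => (1:L)) = fun _ : Fin n => (1:L) := rfl
      rw [h, revProd_one]
      simp

/-- Partial reversed product `y_k ⋯ y_0`. -/
def pprod {n : ℕ} (y : Fin n → L) (k : ℕ) (h : k < n) : L :=
  revProd (fun j : Fin (k+1) => y ⟨j, by omega⟩)

lemma pprod_zero {n : ℕ} (y : Fin n → L) (h : 0 < n) : pprod y 0 h = y ⟨0, h⟩ := by
  unfold pprod
  rw [revProd_succ, revProd_zero, mul_one]
  exact congrArg y (Fin.ext (by simp))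

lemma pprod_succ {n : ℕ} (y : Fin n → L) (k : ℕ) (h : k + 1 < n) :
    pprod y (k+1) h = y ⟨k+1, h⟩ * pprod y k (by omega) := by
  unfold pprod
  rw [revProd_succ]
  congr 1

lemma pprod_last {n : ℕ} (y : Fin (n+1) → L) : pprod y n (by omega) = revProd y := by
  unfold pprod
  congr 1

lemma pprod_congr {n : ℕ} (y : Fin n → L) {k k' : ℕ} (h : k = k') (hk : k < n) :
    pprod y k hk = pprod y k' (h ▸ hk) := by subst h; rfl

lemma revProd_twist : ∀ {n : ℕ} (g x y : Fin (n+1) → L) (c : L),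
    (∀ i : Fin (n+1), y i = g i * x i *
      (if (i : ℕ) = 0 then c else g ⟨(i : ℕ) - 1, by have := i.2; omega⟩)⁻¹) →
    revProd y = g (Fin.last n) * revProd x * c⁻¹
  | 0, g, x, y, c, hy => by
      have h0 := hy 0
      simp at h0
      rw [revProd_succ, revProd_succ x, revProd_zero, revProd_zero]
      have : Fin.last 0 = (0 : Fin 1) := rfl
      rw [this, h0]
      group
  | n + 1, g, x, y, c, hy => by
      have ih := revProd_twist (Fin.init g) (Fin.init x) (Fin.init y) c (fun i => by
        have h := hy i.castSucc
        simp only [Fin.init, Fin.coe_castSucc] at h ⊢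
        rw [h]
        by_cases h0 : (i : ℕ) = 0
        · rw [if_pos h0, if_pos h0]
        · rw [if_neg h0, if_neg h0]
          congr 2)
      rw [revProd_succ, ih, revProd_succ x]
      have hlast := hy (Fin.last (n+1))
      have hne : ((Fin.last (n+1) : Fin (n+2)) : ℕ) ≠ 0 := by simp
      rw [if_neg hne] at hlast
      rw [hlast]
      have hgg : Fin.init g (Fin.last n) =
          g ⟨((Fin.last (n+1) : Fin (n+2)) : ℕ) - 1,
            by have := (Fin.last (n+1)).2; omega⟩ := by
        simp only [Fin.init]
        exact congrArg g (Fin.ext (by simp))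
      rw [hgg]
      group

end THRAux

namespace THRAux

variable {L : Type*} [Group L]

lemma revProd_snoc {n : ℕ} (z : Fin n → L) (a : L) :
    revProd (Fin.snoc z a) = a * revProd z := by
  rw [revProd_succ]
  simp

lemma revProd_thrBase {n : ℕ} (ℓ : L) :
    revProd (thrBase (n+1) ℓ) = ℓ := by
  rw [revProd_succ]
  have h1 : thrBase (n+1) ℓ (Fin.last n) = ℓ := by simp [thrBase]
  have h2 : Fin.init (thrBase (n+1) ℓ) = fun _ : Fin n => (1 : L) := by
    funext i
    simp only [Fin.init, thrBase, Fin.coe_castSucc]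
    rw [if_neg (by have := i.2; omega)]
  rw [h1, h2, revProd_one, mul_one]

lemma mem_thrClass_iff {n : ℕ} (hn : 1 ≤ n)
    (θ : L ≃* L) (ℓ : L) (y : Fin (n+1) → L) :
    y ∈ thrClass θ (n+1) ℓ ↔ revProd y ∈ twConjClass θ ℓ := by
  constructor
  · rintro ⟨g, rfl⟩
    refine ⟨g (Fin.last n), ?_⟩
    have h := revProd_twist g (thrBase (n+1) ℓ)
      (g * thrBase (n+1) ℓ * (thrU θ (n+1) g)⁻¹) (θ (g (Fin.last n)))
      (fun i => rfl)
    rw [h, revProd_thrBase]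
  · rintro ⟨a, ha⟩
    refine ⟨fun i => if h : (i : ℕ) = n then a
      else pprod y i (i.2) * θ a, ?_⟩
    funext i
    simp only [Pi.mul_apply, Pi.inv_apply, thrU, thrBase]
    by_cases h0 : (i : ℕ) = 0
    · have hne : (i : ℕ) ≠ n := by omega
      have hne2 : (i : ℕ) ≠ n + 1 - 1 := by omega
      rw [if_pos h0, if_neg hne2, dif_neg hne,
        dif_pos (show n + 1 - 1 = n by omega)]
      have hp : pprod y (i : ℕ) i.2 = y i := by
        rw [pprod_congr y h0, pprod_zero]
        exact congrArg y (Fin.ext h0.symm)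
      rw [hp]
      group
    · by_cases hn2 : (i : ℕ) = n
      · rw [if_pos (show (i : ℕ) = n + 1 - 1 by omega), if_neg h0, dif_pos hn2,
          dif_neg (show ¬((i : ℕ) - 1 = n) by omega)]
        have h4 : revProd y = y i * pprod y ((i : ℕ) - 1) (by have := i.2; omega) := by
          rw [← pprod_last y, pprod_congr y (show n = (i : ℕ) from hn2.symm),
            pprod_congr y (show (i : ℕ) = (i : ℕ) - 1 + 1 by omega),
            pprod_succ y ((i : ℕ) - 1)]
          congr 1
          exact congrArg y (Fin.ext (show (i : ℕ) - 1 + 1 = (i : ℕ) by omega))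
        rw [mul_inv_rev, ← mul_assoc, ha, h4, mul_inv_cancel_right]
      · rw [dif_neg hn2, if_neg (show ¬((i : ℕ) = n + 1 - 1) by omega), if_neg h0,
          dif_neg (show ¬((i : ℕ) - 1 = n) by have := i.2; omega)]
        have h3 : pprod y (i : ℕ) i.2 = y i * pprod y ((i : ℕ) - 1) (by have := i.2; omega) := by
          rw [pprod_congr y (show (i : ℕ) = (i : ℕ) - 1 + 1 by omega),
            pprod_succ y ((i : ℕ) - 1)]
          congr 1
          exact congrArg y (Fin.ext (show (i : ℕ) - 1 + 1 = (i : ℕ) by omega))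
        rw [h3]
        group

end THRAux

/-- `|C_ℓ| = |L|^{t-1} · |O^{L,θ}_ℓ|`. -/
theorem thrClass_card {L : Type*} [Group L] [Fintype L]
    (θ : L ≃* L) (t : ℕ) (ht : 2 ≤ t) (ℓ : L) :
    Nat.card (thrClass θ t ℓ) = Nat.card L ^ (t - 1) * Nat.card (twConjClass θ ℓ) := by
  obtain ⟨n, rfl⟩ : ∃ n, t = n + 1 := ⟨t - 1, by omega⟩
  have hn : 1 ≤ n := by omega
  have hset : thrClass θ (n+1) ℓ = {y | THRAux.revProd y ∈ twConjClass θ ℓ} :=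
    Set.ext fun y => THRAux.mem_thrClass_iff hn θ ℓ y
  rw [hset]
  have e : {y : Fin (n+1) → L // THRAux.revProd y ∈ twConjClass θ ℓ} ≃
      (Fin n → L) × (twConjClass θ ℓ) :=
    { toFun := fun y => (Fin.init y.1, ⟨THRAux.revProd y.1, y.2⟩)
      invFun := fun p => ⟨Fin.snoc p.1 ((p.2 : L) * (THRAux.revProd p.1)⁻¹), by
        rw [THRAux.revProd_snoc, inv_mul_cancel_right]
        exact p.2.2⟩
      left_inv := fun y => by
        apply Subtype.ext
        have h : (THRAux.revProd y.1) * (THRAux.revProd (Fin.init y.1))⁻¹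
            = y.1 (Fin.last n) := by
          rw [THRAux.revProd_succ]
          group
        simp only [h]
        exact Fin.snoc_init_self y.1
      right_inv := fun p => by
        dsimp only
        congr 1
        · exact Fin.init_snoc _ _
        · apply Subtype.ext
          show THRAux.revProd (Fin.snoc p.1 ((p.2 : L) * (THRAux.revProd p.1)⁻¹))
            = (p.2 : L)
          rw [THRAux.revProd_snoc, inv_mul_cancel_right] }
  have h1 : Nat.card {y : Fin (n+1) → L | THRAux.revProd y ∈ twConjClass θ ℓ}
      = Nat.card ((Fin n → L) × (twConjClass θ ℓ)) := Nat.card_congr e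
  rw [h1, Nat.card_prod]
  have h2 : Nat.card (Fin n → L) = Nat.card L ^ n := by
    simp [Nat.card_eq_fintype_card, Fintype.card_fun]
  rw [h2]
  simp
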